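/- arXiv:0712.2085 — 2 statements merged into one kernel-verified Lean document; each statement's English description precedes it below -/
import Mathlib

section
/- Let d > 1 and let k : (0,∞) → ℝ be a twice-differentiable function satisfying k''(r) + ((d-1)/r) k'(r) = k(r) for all r > 0, with k(r) → 0 as r → ∞ and k not identically zero. Then k' has no zero on (0,∞), i.e., k'(r) ≠ 0 for all r > 0. -/
/-!
If `k' = 0` at a point `x` where `k > 0`, the equation gives `k'' = k > 0` there, so `k` increases
just to the right of `x`. Since `k → 0` at infinity, `k` attains its maximum over `[x, ∞)`, at a
point which is again critical with a positive value, and so is not a maximum after all. Applied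
to `-k` this also rules out `k(x) < 0`; and if `k` and `k'` vanish together, uniqueness for the
linear first-order system satisfied by `(k, k')` forces `k ≡ 0`.
-/

open Filter Set Topology

structure IsModifiedBesselSolution (d : ℝ) (k k' k'' : ℝ → ℝ) : Prop where
  hasDerivAt : ∀ r > 0, HasDerivAt k (k' r) r
  hasDerivAt_deriv : ∀ r > 0, HasDerivAt k' (k'' r) r
  ode : ∀ r > 0, k'' r + ((d - 1) / r) * k' r = k r

theorem eventually_nhdsGT_lt_of_hasDerivAt_pos {f : ℝ → ℝ} {f' x : ℝ}
    (hf : HasDerivAt f f' x) (hf' : 0 < f') : ∀ᶠ y in 𝓝[>] x, f x < f y := by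
  have hslope : ∀ᶠ y in 𝓝[>] x, 0 < slope f x y :=
    (hasDerivAt_iff_tendsto_slope.1 hf).eventually (eventually_gt_nhds hf')
      |>.filter_mono (nhdsGT_le_nhdsNE x)
  filter_upwards [hslope, self_mem_nhdsWithin] with y hy (hxy : x < y)
  rw [slope_def_field, div_pos_iff_of_pos_right (sub_pos.2 hxy)] at hy
  linarith

theorem eventually_nhdsGT_lt_of_deriv_eq_zero {f f' : ℝ → ℝ} {f'' x : ℝ}
    (hf : ∀ᶠ y in 𝓝 x, HasDerivAt f (f' y) y) (hf' : HasDerivAt f' f'' x)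
    (hx : f' x = 0) (hf'' : 0 < f'') : ∀ᶠ y in 𝓝[>] x, f x < f y := by
  have hpos := eventually_nhdsGT_lt_of_hasDerivAt_pos hf' hf''
  rw [hx] at hpos
  obtain ⟨b, hxb, hsub⟩ := mem_nhdsGT_iff_exists_Ioo_subset.1
    ((hf.filter_mono nhdsWithin_le_nhds).and hpos)
  filter_upwards [Ioo_mem_nhdsGT hxb] with y hy
  have hcont : ContinuousOn f (Icc x y) := by
    intro z hz
    rcases hz.1.eq_or_lt with rfl | hxz
    · exact hf.self_of_nhds.continuousAt.continuousWithinAt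
    · exact (hsub ⟨hxz, hz.2.trans_lt hy.2⟩).1.continuousAt.continuousWithinAt
  obtain ⟨c, hc, hslope⟩ := exists_hasDerivAt_eq_slope f f' hy.1 hcont
    fun z hz => (hsub ⟨hz.1, hz.2.trans hy.2⟩).1
  have hc' : 0 < f' c := (hsub ⟨hc.1, hc.2.trans hy.2⟩).2
  rw [hslope, div_pos_iff_of_pos_right (sub_pos.2 hy.1)] at hc'
  linarith

theorem exists_isMaxOn_Ici_of_tendsto_zero {f : ℝ → ℝ} {a : ℝ} (hf : ContinuousOn f (Ici a))
    (hlim : Tendsto f atTop (𝓝 0)) (ha : 0 < f a) : ∃ x ∈ Ici a, IsMaxOn f (Ici a) x := by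
  refine hf.exists_isMaxOn' isClosed_Ici self_mem_Ici ?_
  rw [cocompact_eq_atBot_atTop, inf_sup_right, (disjoint_atBot_principal_Ici a).eq_bot,
    bot_sup_eq]
  exact ((hlim.eventually (eventually_le_nhds ha)).filter_mono inf_le_left)

theorem lipschitzWith_prodMk_snd_fst_sub_mul (c : ℝ) :
    LipschitzWith (1 + ‖c‖₊) fun p : ℝ × ℝ => (p.2, p.1 - c * p.2) := by
  have h := LipschitzWith.prod_snd.prodMk <| LipschitzWith.prod_fst.sub <|
    (lipschitzWith_smul (β := ℝ) c).comp (LipschitzWith.prod_snd (α := ℝ))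
  rw [mul_one] at h
  exact h.weaken (max_le (le_add_of_nonneg_right (by positivity)) le_rfl)

namespace IsModifiedBesselSolution

variable {d : ℝ} {k k' k'' : ℝ → ℝ}

theorem neg (hk : IsModifiedBesselSolution d k k' k'') :
    IsModifiedBesselSolution d (-k) (-k') (-k'') where
  hasDerivAt r hr := (hk.hasDerivAt r hr).neg
  hasDerivAt_deriv r hr := (hk.hasDerivAt_deriv r hr).neg
  ode r hr := by
    simp only [Pi.neg_apply]
    linarith [hk.ode r hr]

theorem eventually_nhdsGT_lt (hk : IsModifiedBesselSolution d k k' k'') {x : ℝ} (hx : 0 < x)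
    (hk'x : k' x = 0) (hkx : 0 < k x) : ∀ᶠ y in 𝓝[>] x, k x < k y := by
  have hk''x : k'' x = k x := by simpa [hk'x] using hk.ode x hx
  exact eventually_nhdsGT_lt_of_deriv_eq_zero
    (eventually_gt_nhds hx |>.mono hk.hasDerivAt) (hk.hasDerivAt_deriv x hx) hk'x (hk''x ▸ hkx)

theorem nonpos_of_deriv_eq_zero (hk : IsModifiedBesselSolution d k k' k'')
    (hlim : Tendsto k atTop (𝓝 0)) {x : ℝ} (hx : 0 < x) (hk'x : k' x = 0) : k x ≤ 0 := by
  by_contra! hkx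
  obtain ⟨m, hxm, hmax⟩ := exists_isMaxOn_Ici_of_tendsto_zero
    (fun y hy => (hk.hasDerivAt y (hx.trans_le hy)).continuousAt.continuousWithinAt) hlim hkx
  have hm : 0 < m := hx.trans_le hxm
  have hk'm : k' m = 0 := by
    rcases (mem_Ici.1 hxm).eq_or_lt with rfl | hxm'
    · exact hk'x
    · exact (hmax.isLocalMax (Ici_mem_nhds hxm')).hasDerivAt_eq_zero (hk.hasDerivAt m hm)
  have hkm : 0 < k m := hkx.trans_le (hmax self_mem_Ici)
  obtain ⟨y, hmy, hy⟩ := ((hk.eventually_nhdsGT_lt hm hk'm hkm).and self_mem_nhdsWithin).exists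
  exact (hmax (hxm.trans hy.le)).not_gt hmy

theorem eq_zero_of_eq_zero_of_deriv_eq_zero (hk : IsModifiedBesselSolution d k k' k'')
    {x : ℝ} (hx : 0 < x) (hkx : k x = 0) (hk'x : k' x = 0) {r : ℝ} (hr : 0 < r) : k r = 0 := by
  set a := min x r / 2 with ha_def
  have ha : 0 < a := by positivity
  have hmem : ∀ y, min x r ≤ y → y ≤ max x r → y ∈ Ioo a (max x r + 1) :=
    fun y hmin hmax => ⟨by linarith, by linarith⟩
  have hv : ∀ t ∈ Ioo a (max x r + 1), LipschitzOnWith (1 + ‖(d - 1) / a‖₊)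
      (fun p : ℝ × ℝ => (p.2, p.1 - (d - 1) / t * p.2)) univ := by
    intro t ht
    refine ((lipschitzWith_prodMk_snd_fst_sub_mul _).weaken ?_).lipschitzOnWith
    gcongr 1 + ?_
    rw [← NNReal.coe_le_coe, coe_nnnorm, coe_nnnorm, norm_div, norm_div,
      Real.norm_of_nonneg ha.le, Real.norm_of_nonneg (ha.trans ht.1).le]
    exact div_le_div_of_nonneg_left (norm_nonneg _) ha ht.1.le
  have hsol : EqOn (fun t => (k t, k' t)) 0 (Ioo a (max x r + 1)) := by
    refine ODE_solution_unique_of_mem_Ioo hv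
      (hmem x (min_le_left x r) (le_max_left x r)) (fun t ht => ⟨?_, mem_univ _⟩)
      (fun t _ => ⟨(hasDerivAt_const t (0 : ℝ × ℝ)).congr_deriv (by ext <;> simp), mem_univ _⟩)
      (by simp [hkx, hk'x])
    have ht0 : 0 < t := ha.trans ht.1
    refine ((hk.hasDerivAt t ht0).prodMk (hk.hasDerivAt_deriv t ht0)).congr_deriv ?_
    simp only [Prod.mk.injEq, true_and]
    linarith [hk.ode t ht0]
  exact congrArg Prod.fst (hsol (hmem r (min_le_right x r) (le_max_right x r)))

end IsModifiedBesselSolution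

theorem stmt0_general (d : ℝ) (k k' k'' : ℝ → ℝ)
    (hk1 : ∀ r > 0, HasDerivAt k (k' r) r)
    (hk2 : ∀ r > 0, HasDerivAt k' (k'' r) r)
    (hode : ∀ r > 0, k'' r + ((d - 1) / r) * k' r = k r)
    (hlim : Tendsto k atTop (nhds 0))
    (hne : ∃ r > 0, k r ≠ 0) :
    ∀ r > 0, k' r ≠ 0 := by
  have hk : IsModifiedBesselSolution d k k' k'' := ⟨hk1, hk2, hode⟩
  intro x hx hk'x
  have hkx : k x = 0 := le_antisymm (hk.nonpos_of_deriv_eq_zero hlim hx hk'x) <| by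
    have hlim_neg : Tendsto (-k) atTop (𝓝 0) := by rw [← neg_zero]; exact hlim.neg
    simpa using hk.neg.nonpos_of_deriv_eq_zero hlim_neg hx (by simp [hk'x])
  obtain ⟨r, hr, hkr⟩ := hne
  exact hkr (hk.eq_zero_of_eq_zero_of_deriv_eq_zero hx hkx hk'x hr)

/-- A decaying, not identically zero solution of `k'' + ((d-1)/r) k' = k` on `(0,∞)`
has nonvanishing derivative on `(0,∞)`. -/
theorem stmt0 (d : ℝ) (hd : 1 < d) (k k' k'' : ℝ → ℝ)
    (hk1 : ∀ r > 0, HasDerivAt k (k' r) r)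
    (hk2 : ∀ r > 0, HasDerivAt k' (k'' r) r)
    (hode : ∀ r > 0, k'' r + ((d - 1) / r) * k' r = k r)
    (hlim : Tendsto k atTop (nhds 0))
    (hne : ∃ r > 0, k r ≠ 0) :
    ∀ r > 0, k' r ≠ 0 :=
  stmt0_general d k k' k'' hk1 hk2 hode hlim hne
end

section
/- Let d > 2. The kernel K(x,y) on [1,∞)² defined by K(x,y) = x^{1−d} y^{1−d} for x ≤ y and K(x,y) = x^{−d} y^{2−d} for x > y defines a bounded operator on L^p([1,∞); x^{d−1} dx) for all 1 < p < d, and the operator with this kernel is unbounded on L^d([1,∞); x^{d−1} dx). -/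
/-!
Split `|K|` along the diagonal and bound each half on `L^p(x^{d-1} dx)` by Schur's test with a
power weight: `x^{-(d-1)/p}` above the diagonal and `x^{-1/q}` below it, `q` the conjugate
exponent (no single power weight serves the whole kernel when `p` is close to `1`). The test
integrals are integrals of powers of `x`, finite precisely because `d > 2` and `1 < p < d`.
At `p = d`, the function `1/(y log 2y)` is in `L^d` because `∫ (log 2y)^{-d} dy/y < ∞`, but the
part above the diagonal already sends it to `x^{1-d} ∫_x^∞ dy/(y log 2y) = ∞`.
-/

open Real MeasureTheory Set ENNReal

/-- The measure `x^{d-1} dx` on `[1,∞)`. -/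
noncomputable def muD (d : ℝ) : Measure ℝ :=
  (volume.withDensity fun x => ENNReal.ofReal (x ^ (d - 1))).restrict (Ici 1)

/-- The kernel `K(x,y) = x^{1-d} y^{1-d}` for `x ≤ y`, `x^{-d} y^{2-d}` for `x > y`. -/
noncomputable def Kd (d : ℝ) (x y : ℝ) : ℝ :=
  if x ≤ y then x ^ (1 - d) * y ^ (1 - d) else x ^ (-d) * y ^ (2 - d)

open Filter

section LpKernelBound

variable {α : Type*} [MeasurableSpace α] {μ : Measure α} {p q : ℝ}

def LpKernelBound (μ : Measure α) (p : ℝ) (K : α → α → ℝ≥0∞) (C : ℝ≥0∞) : Prop :=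
  ∀ g : α → ℝ≥0∞, Measurable g → ∫⁻ x, (∫⁻ y, K x y * g y ∂μ) ^ p ∂μ ≤ C * ∫⁻ y, g y ^ p ∂μ

theorem lintegral_mul_le_weighted_Lp_mul_Lq (hpq : p.HolderConjugate q) {k w g : α → ℝ≥0∞}
    (hk : AEMeasurable k μ) (hw : AEMeasurable w μ) (hg : AEMeasurable g μ)
    (hw0 : ∀ᵐ y ∂μ, w y ≠ 0) (hwt : ∀ᵐ y ∂μ, w y ≠ ∞) :
    ∫⁻ y, k y * g y ∂μ ≤
      (∫⁻ y, k y * w y ^ q ∂μ) ^ (1 / q) * (∫⁻ y, k y * (g y / w y) ^ p ∂μ) ^ (1 / p) := by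
  have hp := hpq.pos
  have hq := hpq.symm.pos
  have hsplit : ∀ᵐ y ∂μ, k y * g y = (k y ^ q⁻¹ * w y) * (k y ^ p⁻¹ * (g y / w y)) := by
    filter_upwards [hw0, hwt] with y h0 ht
    rw [mul_mul_mul_comm, ← ENNReal.rpow_add_of_nonneg _ _ (by positivity) (by positivity),
      add_comm, hpq.inv_add_inv_eq_one, ENNReal.rpow_one, ENNReal.mul_div_cancel h0 ht]
  calc ∫⁻ y, k y * g y ∂μ
      = ∫⁻ y, ((fun y => k y ^ q⁻¹ * w y) * fun y => k y ^ p⁻¹ * (g y / w y)) y ∂μ :=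
        lintegral_congr_ae hsplit
    _ ≤ _ := ENNReal.lintegral_mul_le_Lp_mul_Lq μ hpq.symm (by fun_prop) (by fun_prop)
    _ = _ := by
        simp only [ENNReal.mul_rpow_of_nonneg _ _ hp.le, ENNReal.mul_rpow_of_nonneg _ _ hq.le,
          ENNReal.rpow_inv_rpow hp.ne', ENNReal.rpow_inv_rpow hq.ne']

theorem LpKernelBound.of_schur [SFinite μ] (hpq : p.HolderConjugate q) {K : α → α → ℝ≥0∞}
    (hK : Measurable (Function.uncurry K)) {w : α → ℝ≥0∞} (hw : Measurable w)
    (hw0 : ∀ᵐ x ∂μ, w x ≠ 0) (hwt : ∀ᵐ x ∂μ, w x ≠ ∞) {A B : ℝ≥0∞}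
    (hA : ∀ᵐ x ∂μ, ∫⁻ y, K x y * w y ^ q ∂μ ≤ A * w x ^ q)
    (hB : ∀ᵐ y ∂μ, ∫⁻ x, K x y * w x ^ p ∂μ ≤ B * w y ^ p) :
    LpKernelBound μ p K (A ^ (p / q) * B) := by
  intro g hg
  have hp := hpq.pos
  have hq := hpq.symm.pos
  have hKx : ∀ x, Measurable (K x) := fun x => hK.of_uncurry_left
  have pointwise : ∀ᵐ x ∂μ, (∫⁻ y, K x y * g y ∂μ) ^ p
      ≤ A ^ (p / q) * ∫⁻ y, w x ^ p * (K x y * (g y / w y) ^ p) ∂μ := by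
    filter_upwards [hA] with x hAx
    calc (∫⁻ y, K x y * g y ∂μ) ^ p
        ≤ ((A * w x ^ q) ^ (1 / q) * (∫⁻ y, K x y * (g y / w y) ^ p ∂μ) ^ (1 / p)) ^ p := by
          gcongr
          exact (lintegral_mul_le_weighted_Lp_mul_Lq hpq (hKx x).aemeasurable hw.aemeasurable
            hg.aemeasurable hw0 hwt).trans (by gcongr)
      _ = A ^ (p / q) * ∫⁻ y, w x ^ p * (K x y * (g y / w y) ^ p) ∂μ := by
          have := hKx x
          rw [lintegral_const_mul _ (by fun_prop), ENNReal.mul_rpow_of_nonneg _ _ hp.le,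
            ← ENNReal.rpow_mul, ← ENNReal.rpow_mul, one_div_mul_cancel hp.ne', ENNReal.rpow_one,
            ENNReal.mul_rpow_of_nonneg _ _ (by positivity), ← ENNReal.rpow_mul,
            one_div_mul_eq_div, mul_div_cancel₀ _ hq.ne', mul_assoc]
  have cancel : ∀ᵐ y ∂μ, (∫⁻ x, K x y * w x ^ p ∂μ) * (g y / w y) ^ p ≤ B * g y ^ p := by
    filter_upwards [hB, hw0, hwt] with y hBy h0 ht
    calc (∫⁻ x, K x y * w x ^ p ∂μ) * (g y / w y) ^ p ≤ B * w y ^ p * (g y / w y) ^ p := by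
          gcongr
      _ = B * g y ^ p := by
          rw [mul_assoc, ← ENNReal.mul_rpow_of_nonneg _ _ hp.le, ENNReal.mul_div_cancel h0 ht]
  calc ∫⁻ x, (∫⁻ y, K x y * g y ∂μ) ^ p ∂μ
      ≤ ∫⁻ x, A ^ (p / q) * ∫⁻ y, w x ^ p * (K x y * (g y / w y) ^ p) ∂μ ∂μ :=
        lintegral_mono_ae pointwise
    _ = A ^ (p / q) * ∫⁻ y, (∫⁻ x, K x y * w x ^ p ∂μ) * (g y / w y) ^ p ∂μ := by
        rw [lintegral_const_mul _ (by fun_prop), lintegral_lintegral_swap (by fun_prop)]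
        congr 1
        refine lintegral_congr fun y => ?_
        rw [← lintegral_mul_const _ (by fun_prop)]
        exact lintegral_congr fun x => by ring
    _ ≤ A ^ (p / q) * ∫⁻ y, B * g y ^ p ∂μ := by
        gcongr A ^ (p / q) * ?_
        exact lintegral_mono_ae cancel
    _ = A ^ (p / q) * B * ∫⁻ y, g y ^ p ∂μ := by
        rw [lintegral_const_mul _ (by fun_prop), mul_assoc]

theorem LpKernelBound.add [SFinite μ] (hp : 1 ≤ p) {K₁ K₂ : α → α → ℝ≥0∞} {C₁ C₂ : ℝ≥0∞}
    (hK₁ : Measurable (Function.uncurry K₁)) (h₁ : LpKernelBound μ p K₁ C₁)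
    (h₂ : LpKernelBound μ p K₂ C₂) :
    LpKernelBound μ p (fun x y => K₁ x y + K₂ x y) (2 ^ (p - 1) * (C₁ + C₂)) := by
  intro g hg
  have hK₁x : ∀ x, Measurable (K₁ x) := fun x => hK₁.of_uncurry_left
  have hT₁ : Measurable fun x => ∫⁻ y, K₁ x y * g y ∂μ :=
    Measurable.lintegral_prod_right' (f := fun z => K₁ z.1 z.2 * g z.2) (by fun_prop)
  calc ∫⁻ x, (∫⁻ y, (K₁ x y + K₂ x y) * g y ∂μ) ^ p ∂μ
      = ∫⁻ x, (∫⁻ y, K₁ x y * g y ∂μ + ∫⁻ y, K₂ x y * g y ∂μ) ^ p ∂μ := by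
        refine lintegral_congr fun x => ?_
        have := hK₁x x
        simp only [add_mul]
        rw [lintegral_add_left (by fun_prop)]
    _ ≤ ∫⁻ x, 2 ^ (p - 1) * ((∫⁻ y, K₁ x y * g y ∂μ) ^ p + (∫⁻ y, K₂ x y * g y ∂μ) ^ p) ∂μ :=
        lintegral_mono fun x => ENNReal.rpow_add_le_mul_rpow_add_rpow _ _ hp
    _ = 2 ^ (p - 1) * (∫⁻ x, (∫⁻ y, K₁ x y * g y ∂μ) ^ p ∂μ
          + ∫⁻ x, (∫⁻ y, K₂ x y * g y ∂μ) ^ p ∂μ) := by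
        rw [lintegral_const_mul' _ _ (by simp), lintegral_add_left (by fun_prop)]
    _ ≤ 2 ^ (p - 1) * (C₁ * ∫⁻ y, g y ^ p ∂μ + C₂ * ∫⁻ y, g y ^ p ∂μ) := by
        gcongr
        exacts [h₁ g hg, h₂ g hg]
    _ = 2 ^ (p - 1) * (C₁ + C₂) * ∫⁻ y, g y ^ p ∂μ := by ring

theorem LpKernelBound.memLp_integral [SFinite μ] (hp : 0 < p) {K : α → α → ℝ}
    (hK : Measurable (Function.uncurry K)) {C : ℝ≥0∞} (hC : C ≠ ∞)
    (hKC : LpKernelBound μ p (fun x y => ‖K x y‖ₑ) C) {f : α → ℝ}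
    (hf : MemLp f (ENNReal.ofReal p) μ) :
    MemLp (fun x => ∫ y, K x y * f y ∂μ) (ENNReal.ofReal p) μ ∧
      eLpNorm (fun x => ∫ y, K x y * f y ∂μ) (ENNReal.ofReal p) μ
        ≤ C ^ (1 / p) * eLpNorm f (ENNReal.ofReal p) μ := by
  set f' := hf.1.mk f
  have hf' : Measurable f' := hf.1.stronglyMeasurable_mk.measurable
  have hTf : (fun x => ∫ y, K x y * f y ∂μ) = fun x => ∫ y, K x y * f' y ∂μ := by
    funext x
    exact integral_congr_ae (hf.1.ae_eq_mk.mono fun y hy => by simp only [hy, f'])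
  have hTm : StronglyMeasurable fun x => ∫ y, K x y * f' y ∂μ :=
    StronglyMeasurable.integral_prod_right (f := fun x y => K x y * f' y)
      (by fun_prop : Measurable fun z : α × α => K z.1 z.2 * f' z.2).stronglyMeasurable
  have hp' : ENNReal.ofReal p ≠ 0 := by simpa using hp
  have eLpNorm_eq (u : α → ℝ) :
      eLpNorm u (ENNReal.ofReal p) μ = (∫⁻ x, ‖u x‖ₑ ^ p ∂μ) ^ (1 / p) := by
    rw [eLpNorm_eq_lintegral_rpow_enorm_toReal hp' ofReal_ne_top, toReal_ofReal hp.le]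
  have bound : eLpNorm (fun x => ∫ y, K x y * f y ∂μ) (ENNReal.ofReal p) μ
      ≤ C ^ (1 / p) * eLpNorm f (ENNReal.ofReal p) μ := by
    rw [hTf, eLpNorm_congr_ae hf.1.ae_eq_mk, eLpNorm_eq, eLpNorm_eq,
      ← ENNReal.mul_rpow_of_nonneg _ _ (by positivity)]
    gcongr
    calc ∫⁻ x, ‖∫ y, K x y * f' y ∂μ‖ₑ ^ p ∂μ
        ≤ ∫⁻ x, (∫⁻ y, ‖K x y‖ₑ * ‖f' y‖ₑ ∂μ) ^ p ∂μ := by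
          gcongr with x
          exact (enorm_integral_le_lintegral_enorm _).trans_eq (by simp only [enorm_mul])
      _ ≤ C * ∫⁻ y, ‖f' y‖ₑ ^ p ∂μ := hKC _ (by fun_prop)
  refine ⟨⟨by rw [hTf]; exact hTm.aestronglyMeasurable, bound.trans_lt ?_⟩, bound⟩
  exact ENNReal.mul_lt_top (ENNReal.rpow_lt_top_of_nonneg (by positivity) hC) hf.2

end LpKernelBound

instance (d : ℝ) : SFinite (muD d) := by
  unfold muD
  infer_instance

theorem ae_muD_one_le (d : ℝ) : ∀ᵐ x ∂muD d, 1 ≤ x := ae_restrict_mem measurableSet_Ici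

theorem lintegral_muD (d : ℝ) (F : ℝ → ℝ≥0∞) :
    ∫⁻ x, F x ∂muD d = ∫⁻ x in Ici 1, ENNReal.ofReal (x ^ (d - 1)) * F x := by
  rw [muD, restrict_withDensity measurableSet_Ici,
    lintegral_withDensity_eq_lintegral_mul_non_measurable _ (by fun_prop)
      (ae_of_all _ fun _ => ofReal_lt_top)]
  rfl

theorem integral_muD (d : ℝ) (F : ℝ → ℝ) :
    ∫ x, F x ∂muD d = ∫ x in Ici 1, F x * x ^ (d - 1) := by
  rw [muD, restrict_withDensity measurableSet_Ici,
    integral_withDensity_eq_integral_toReal_smul (by fun_prop) (ae_of_all _ fun _ => ofReal_lt_top)]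
  refine setIntegral_congr_fun measurableSet_Ici fun x (hx : 1 ≤ x) => ?_
  rw [toReal_ofReal (by positivity), smul_eq_mul, mul_comm]

theorem lintegral_Ici_ofReal_rpow_neg {a x : ℝ} (ha : 1 < a) (hx : 0 < x) :
    ∫⁻ y in Ici x, ENNReal.ofReal (y ^ (-a)) = ENNReal.ofReal (x ^ (1 - a) / (a - 1)) := by
  have hint : IntegrableOn (fun y : ℝ => y ^ (-a)) (Ioi x) :=
    integrableOn_Ioi_rpow_of_lt (by linarith) hx
  rw [← Measure.restrict_congr_set Ioi_ae_eq_Ici, ← ofReal_integral_eq_lintegral_ofReal hint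
    ((ae_restrict_iff' measurableSet_Ioi).2 (ae_of_all _ fun y (hy : x < y) => by
      have : 0 < y := hx.trans hy
      positivity)), integral_Ioi_rpow_of_lt (by linarith) hx]
  congr 1
  rw [show -a + 1 = 1 - a by ring, ← neg_div_neg_eq, neg_neg, neg_sub]

noncomputable def kernelAbove (d x y : ℝ) : ℝ≥0∞ := if x ≤ y then ‖Kd d x y‖ₑ else 0

noncomputable def kernelBelow (d x y : ℝ) : ℝ≥0∞ := if x ≤ y then 0 else ‖Kd d x y‖ₑ

theorem enorm_Kd (d x y : ℝ) : ‖Kd d x y‖ₑ = kernelAbove d x y + kernelBelow d x y := by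
  unfold kernelAbove kernelBelow
  split_ifs <;> simp

theorem measurable_Kd (d : ℝ) : Measurable (Function.uncurry (Kd d)) :=
  Measurable.ite (measurableSet_le measurable_fst measurable_snd) (by fun_prop) (by fun_prop)

theorem measurable_kernelAbove (d : ℝ) : Measurable (Function.uncurry (kernelAbove d)) :=
  Measurable.ite (measurableSet_le measurable_fst measurable_snd)
    (measurable_Kd d).enorm measurable_const

theorem measurable_kernelBelow (d : ℝ) : Measurable (Function.uncurry (kernelBelow d)) :=
  Measurable.ite (measurableSet_le measurable_fst measurable_snd) measurable_const
    (measurable_Kd d).enorm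

theorem lintegral_kernelAbove_mul_rpow_snd_le {d a x : ℝ} (ha : 1 < a) (hd : 2 ≤ d) (hx : 1 ≤ x) :
    ∫⁻ y, kernelAbove d x y * ENNReal.ofReal y ^ (-a) ∂muD d
      ≤ ENNReal.ofReal (1 / (a - 1)) * ENNReal.ofReal x ^ (-a) := by
  have hx0 : 0 < x := by linarith
  have integrand : ∀ y ∈ Ici (1 : ℝ),
      ENNReal.ofReal (y ^ (d - 1)) * (kernelAbove d x y * ENNReal.ofReal y ^ (-a))
        = (Ici x).indicator
            (fun y => ENNReal.ofReal (x ^ (1 - d)) * ENNReal.ofReal (y ^ (-a))) y := by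
    intro y (hy : 1 ≤ y)
    have hy0 : 0 < y := by linarith
    by_cases hxy : x ≤ y
    · rw [indicator_of_mem (mem_Ici.2 hxy), kernelAbove, if_pos hxy, Kd, if_pos hxy,
        Real.enorm_of_nonneg (by positivity), ofReal_rpow_of_pos hy0, ← ofReal_mul (by positivity),
        ← ofReal_mul (by positivity), ← ofReal_mul (by positivity),
        show y ^ (d - 1) * (x ^ (1 - d) * y ^ (1 - d) * y ^ (-a))
          = x ^ (1 - d) * (y ^ (d - 1) * y ^ (1 - d) * y ^ (-a)) by ring,
        ← rpow_add hy0, ← rpow_add hy0]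
      ring_nf
    · simp [kernelAbove, hxy]
  rw [lintegral_muD, setLIntegral_congr_fun measurableSet_Ici integrand,
    lintegral_indicator measurableSet_Ici, Measure.restrict_restrict measurableSet_Ici,
    inter_eq_left.2 (Ici_subset_Ici.2 hx), lintegral_const_mul _ (by fun_prop),
    lintegral_Ici_ofReal_rpow_neg ha hx0, ofReal_rpow_of_pos hx0, ← ofReal_mul (by positivity),
    ← ofReal_mul (by positivity)]
  refine ofReal_le_ofReal ?_
  have ha1 : 0 < a - 1 := by linarith
  have hpow : x ^ (1 - d) * x ^ (1 - a) ≤ x ^ (-a) := by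
    rw [← rpow_add hx0]
    exact rpow_le_rpow_of_exponent_le hx (by linarith)
  calc x ^ (1 - d) * (x ^ (1 - a) / (a - 1)) = x ^ (1 - d) * x ^ (1 - a) / (a - 1) := by ring
    _ ≤ x ^ (-a) / (a - 1) := by gcongr
    _ = 1 / (a - 1) * x ^ (-a) := by ring

theorem lintegral_kernelAbove_mul_rpow_fst_le {d a y : ℝ} (ha : 1 < a) (had : a ≤ d - 1)
    (hy : 1 ≤ y) :
    ∫⁻ x, kernelAbove d x y * ENNReal.ofReal x ^ (-a) ∂muD d
      ≤ ENNReal.ofReal (1 / (a - 1)) * ENNReal.ofReal y ^ (-a) := by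
  have hy0 : 0 < y := by linarith
  have ha1 : 0 < a - 1 := by linarith
  have integrand : ∀ x ∈ Ici (1 : ℝ),
      ENNReal.ofReal (x ^ (d - 1)) * (kernelAbove d x y * ENNReal.ofReal x ^ (-a))
        = (Iic y).indicator
            (fun x => ENNReal.ofReal (y ^ (1 - d)) * ENNReal.ofReal (x ^ (-a))) x := by
    intro x (hx : 1 ≤ x)
    have hx0 : 0 < x := by linarith
    by_cases hxy : x ≤ y
    · rw [indicator_of_mem (mem_Iic.2 hxy), kernelAbove, if_pos hxy, Kd, if_pos hxy,
        Real.enorm_of_nonneg (by positivity), ofReal_rpow_of_pos hx0, ← ofReal_mul (by positivity),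
        ← ofReal_mul (by positivity), ← ofReal_mul (by positivity),
        show x ^ (d - 1) * (x ^ (1 - d) * y ^ (1 - d) * x ^ (-a))
          = y ^ (1 - d) * (x ^ (d - 1) * x ^ (1 - d) * x ^ (-a)) by ring,
        ← rpow_add hx0, ← rpow_add hx0]
      ring_nf
    · simp [kernelAbove, hxy]
  rw [lintegral_muD, setLIntegral_congr_fun measurableSet_Ici integrand,
    lintegral_indicator measurableSet_Iic, Measure.restrict_restrict measurableSet_Iic,
    lintegral_const_mul _ (by fun_prop)]
  calc ENNReal.ofReal (y ^ (1 - d)) * ∫⁻ x in Iic y ∩ Ici 1, ENNReal.ofReal (x ^ (-a))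
      ≤ ENNReal.ofReal (y ^ (1 - d)) * ∫⁻ x in Ici 1, ENNReal.ofReal (x ^ (-a)) := by
        gcongr
        exact inter_subset_right
    _ = ENNReal.ofReal (y ^ (1 - d) * (1 / (a - 1))) := by
        rw [lintegral_Ici_ofReal_rpow_neg ha one_pos, Real.one_rpow, ← ofReal_mul (by positivity)]
    _ ≤ ENNReal.ofReal (1 / (a - 1)) * ENNReal.ofReal y ^ (-a) := by
        rw [ofReal_rpow_of_pos hy0, ← ofReal_mul (by positivity), mul_comm (y ^ (1 - d))]
        exact ofReal_le_ofReal (by gcongr; linarith)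

theorem lintegral_kernelBelow_mul_rpow_neg_one_snd_le {d x : ℝ} (hd : 2 ≤ d) (hx : 1 ≤ x) :
    ∫⁻ y, kernelBelow d x y * ENNReal.ofReal y ^ (-1 : ℝ) ∂muD d ≤ ENNReal.ofReal x ^ (-1 : ℝ) := by
  have hx0 : 0 < x := by linarith
  have integrand : ∀ y ∈ Ici (1 : ℝ),
      ENNReal.ofReal (y ^ (d - 1)) * (kernelBelow d x y * ENNReal.ofReal y ^ (-1 : ℝ))
        = (Iio x).indicator (fun _ => ENNReal.ofReal (x ^ (-d))) y := by
    intro y (hy : 1 ≤ y)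
    have hy0 : 0 < y := by linarith
    by_cases hxy : x ≤ y
    · simp [kernelBelow, hxy]
    · rw [indicator_of_mem (mem_Iio.2 (not_le.1 hxy)), kernelBelow, if_neg hxy, Kd, if_neg hxy,
        Real.enorm_of_nonneg (by positivity), ofReal_rpow_of_pos hy0, ← ofReal_mul (by positivity),
        ← ofReal_mul (by positivity),
        show y ^ (d - 1) * (x ^ (-d) * y ^ (2 - d) * y ^ (-1 : ℝ))
          = x ^ (-d) * (y ^ (d - 1) * y ^ (2 - d) * y ^ (-1 : ℝ)) by ring,
        ← rpow_add hy0, ← rpow_add hy0]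
      ring_nf
      rw [Real.rpow_zero, mul_one]
  rw [lintegral_muD, setLIntegral_congr_fun measurableSet_Ici integrand,
    lintegral_indicator measurableSet_Iio, Measure.restrict_restrict measurableSet_Iio,
    setLIntegral_const, inter_comm, Ici_inter_Iio, Real.volume_Ico, ofReal_rpow_of_pos hx0,
    ← ofReal_mul (by positivity)]
  refine ofReal_le_ofReal ?_
  calc x ^ (-d) * (x - 1) ≤ x ^ (-d) * x := by gcongr; linarith
    _ = x ^ (-d + 1) := by rw [rpow_add hx0, Real.rpow_one]
    _ ≤ x ^ (-1 : ℝ) := rpow_le_rpow_of_exponent_le hx (by linarith)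

theorem lintegral_kernelBelow_mul_rpow_fst_le {d a y : ℝ} (ha : 0 < a) (hd : 2 ≤ d) (hy : 1 ≤ y) :
    ∫⁻ x, kernelBelow d x y * ENNReal.ofReal x ^ (-a) ∂muD d
      ≤ ENNReal.ofReal (1 / a) * ENNReal.ofReal y ^ (-a) := by
  have hy0 : 0 < y := by linarith
  have integrand : ∀ x ∈ Ici (1 : ℝ),
      ENNReal.ofReal (x ^ (d - 1)) * (kernelBelow d x y * ENNReal.ofReal x ^ (-a))
        = (Ioi y).indicator
            (fun x => ENNReal.ofReal (y ^ (2 - d)) * ENNReal.ofReal (x ^ (-(a + 1)))) x := by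
    intro x (hx : 1 ≤ x)
    have hx0 : 0 < x := by linarith
    by_cases hxy : x ≤ y
    · simp [kernelBelow, hxy]
    · rw [indicator_of_mem (mem_Ioi.2 (not_le.1 hxy)), kernelBelow, if_neg hxy, Kd, if_neg hxy,
        Real.enorm_of_nonneg (by positivity), ofReal_rpow_of_pos hx0, ← ofReal_mul (by positivity),
        ← ofReal_mul (by positivity), ← ofReal_mul (by positivity),
        show x ^ (d - 1) * (x ^ (-d) * y ^ (2 - d) * x ^ (-a))
          = y ^ (2 - d) * (x ^ (d - 1) * x ^ (-d) * x ^ (-a)) by ring,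
        ← rpow_add hx0, ← rpow_add hx0]
      ring_nf
  rw [lintegral_muD, setLIntegral_congr_fun measurableSet_Ici integrand,
    lintegral_indicator measurableSet_Ioi, Measure.restrict_restrict measurableSet_Ioi,
    lintegral_const_mul _ (by fun_prop)]
  calc ENNReal.ofReal (y ^ (2 - d)) * ∫⁻ x in Ioi y ∩ Ici 1, ENNReal.ofReal (x ^ (-(a + 1)))
      ≤ ENNReal.ofReal (y ^ (2 - d)) * ∫⁻ x in Ici y, ENNReal.ofReal (x ^ (-(a + 1))) := by
        gcongr
        exact inter_subset_left.trans Ioi_subset_Ici_self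
    _ = ENNReal.ofReal (y ^ (2 - d) * (y ^ (-a) / a)) := by
        rw [lintegral_Ici_ofReal_rpow_neg (by linarith) hy0, ← ofReal_mul (by positivity)]
        ring_nf
    _ ≤ ENNReal.ofReal (1 / a) * ENNReal.ofReal y ^ (-a) := by
        rw [ofReal_rpow_of_pos hy0, ← ofReal_mul (by positivity)]
        refine ofReal_le_ofReal ?_
        calc y ^ (2 - d) * (y ^ (-a) / a) ≤ 1 * (y ^ (-a) / a) := by
              gcongr
              exact rpow_le_one_of_one_le_of_nonpos hy (by linarith)
          _ = 1 / a * y ^ (-a) := by ring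

theorem lpKernelBound_Kd {d p : ℝ} (hd : 2 < d) (hp : 1 < p) (hpd : p < d) :
    ∃ C, C ≠ ∞ ∧ LpKernelBound (muD d) p (fun x y => ‖Kd d x y‖ₑ) C := by
  obtain ⟨q, hpq⟩ : ∃ q, p.HolderConjugate q := ⟨_, .conjExponent hp⟩
  have hp0 := hpq.pos
  have hq0 := hpq.symm.pos
  have hx0 : ∀ᵐ x ∂muD d, ENNReal.ofReal x ≠ 0 := by
    filter_upwards [ae_muD_one_le d] with x hx
    simpa using zero_lt_one.trans_le hx
  have hw0 (a : ℝ) : ∀ᵐ x ∂muD d, ENNReal.ofReal x ^ a ≠ 0 :=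
    hx0.mono fun x hx => (ENNReal.rpow_pos (pos_iff_ne_zero.2 hx) ofReal_ne_top).ne'
  have hwt (a : ℝ) : ∀ᵐ x ∂muD d, ENNReal.ofReal x ^ a ≠ ∞ :=
    hx0.mono fun x hx => rpow_ne_top_of_ne_zero hx ofReal_ne_top
  set s := (d - 1) / p
  have hsp : s * p = d - 1 := div_mul_cancel₀ _ hp0.ne'
  have hsq : 1 < s * q := by
    rw [hpq.conjugate_eq, ← mul_div_assoc, hsp, one_lt_div (by linarith)]
    linarith
  have h₁ : LpKernelBound (muD d) p (kernelAbove d)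
      (ENNReal.ofReal (1 / (s * q - 1)) ^ (p / q) * ENNReal.ofReal (1 / (s * p - 1))) := by
    refine LpKernelBound.of_schur hpq (measurable_kernelAbove d)
      (w := fun x => ENNReal.ofReal x ^ (-s)) (by fun_prop) (hw0 _) (hwt _) ?_ ?_
    · filter_upwards [ae_muD_one_le d] with x hx
      simp only [← ENNReal.rpow_mul, neg_mul]
      exact lintegral_kernelAbove_mul_rpow_snd_le hsq hd.le hx
    · filter_upwards [ae_muD_one_le d] with y hy
      simp only [← ENNReal.rpow_mul, neg_mul]
      exact lintegral_kernelAbove_mul_rpow_fst_le (by linarith) hsp.le hy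
  have h₂ : LpKernelBound (muD d) p (kernelBelow d)
      (1 ^ (p / q) * ENNReal.ofReal (1 / (q⁻¹ * p))) := by
    refine LpKernelBound.of_schur hpq (measurable_kernelBelow d)
      (w := fun x => ENNReal.ofReal x ^ (-q⁻¹)) (by fun_prop) (hw0 _) (hwt _) ?_ ?_
    · filter_upwards [ae_muD_one_le d] with x hx
      simp only [← ENNReal.rpow_mul, neg_mul, inv_mul_cancel₀ hq0.ne', one_mul]
      exact lintegral_kernelBelow_mul_rpow_neg_one_snd_le hd.le hx
    · filter_upwards [ae_muD_one_le d] with y hy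
      simp only [← ENNReal.rpow_mul, neg_mul]
      exact lintegral_kernelBelow_mul_rpow_fst_le (by positivity) hd.le hy
  simp only [enorm_Kd]
  exact ⟨_, by finiteness, h₁.add hp.le (measurable_kernelAbove d) h₂⟩

noncomputable def invMulLog (y : ℝ) : ℝ := (Ici 1).indicator (fun y => (y * Real.log (2 * y))⁻¹) y

theorem log_two_mul_pos {y : ℝ} (hy : 1 ≤ y) : 0 < Real.log (2 * y) := log_pos (by linarith)

theorem invMulLog_nonneg (y : ℝ) : 0 ≤ invMulLog y :=
  indicator_nonneg (fun y (hy : 1 ≤ y) => by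
    have := log_two_mul_pos hy
    have : 0 < y := by linarith
    positivity) y

theorem hasDerivAt_log_log_two_mul {y : ℝ} (hy : 1 ≤ y) :
    HasDerivAt (fun y => Real.log (Real.log (2 * y))) (y * Real.log (2 * y))⁻¹ y := by
  have hL := log_two_mul_pos hy
  have hy0 : 0 < y := by linarith
  refine ((((hasDerivAt_id' y).const_mul 2).log (by positivity)).log hL.ne').congr_deriv ?_
  field_simp

theorem hasDerivAt_log_two_mul_rpow {y : ℝ} (hy : 1 ≤ y) {d : ℝ} (hd : d ≠ 1) :
    HasDerivAt (fun y => Real.log (2 * y) ^ (1 - d) / (1 - d)) (Real.log (2 * y) ^ (-d) / y) y := by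
  have hL := log_two_mul_pos hy
  have hy0 : 0 < y := by linarith
  have hd' : 1 - d ≠ 0 := sub_ne_zero.2 hd.symm
  refine (((((hasDerivAt_id' y).const_mul 2).log (by positivity)).rpow_const
    (p := 1 - d) (Or.inl hL.ne')).div_const (1 - d)).congr_deriv ?_
  rw [show 1 - d - 1 = -d by ring]
  field_simp

theorem not_integrableOn_Ici_inv_mul_log (x : ℝ) :
    ¬IntegrableOn (fun y => (y * Real.log (2 * y))⁻¹) (Ici x) := by
  have hderiv : ∀ᶠ y in atTop,
      HasDerivAt (fun y => Real.log (Real.log (2 * y))) (y * Real.log (2 * y))⁻¹ y := by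
    filter_upwards [Ici_mem_atTop 1] with y hy using hasDerivAt_log_log_two_mul hy
  have htendsto : Tendsto (fun y => ‖Real.log (Real.log (2 * y))‖) atTop atTop :=
    tendsto_norm_atTop_atTop.comp (tendsto_log_atTop.comp
      (tendsto_log_atTop.comp (tendsto_id.const_mul_atTop two_pos)))
  exact not_integrableOn_of_tendsto_norm_atTop_of_deriv_isBigO_filter atTop (Ici_mem_atTop x)
    (hderiv.mono fun y hy => hy.differentiableAt) htendsto
    (EventuallyEq.isBigO (hderiv.mono fun y hy => hy.deriv))

theorem integrableOn_Ici_log_two_mul_rpow_neg_div {d : ℝ} (hd : 1 < d) :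
    IntegrableOn (fun y => Real.log (2 * y) ^ (-d) / y) (Ici 1) := by
  rw [integrableOn_Ici_iff_integrableOn_Ioi]
  refine integrableOn_Ioi_deriv_of_nonneg' (fun y hy => hasDerivAt_log_two_mul_rpow hy hd.ne')
    (fun y (hy : 1 < y) => ?_) ?_ (l := 0)
  · have := log_two_mul_pos hy.le
    have : 0 < y := by linarith
    positivity
  · have := ((tendsto_rpow_neg_atTop (by linarith : 0 < d - 1)).comp
      (tendsto_log_atTop.comp (tendsto_id.const_mul_atTop two_pos))).div_const (1 - d)
    simpa [Function.comp_def] using this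

theorem memLp_invMulLog {d : ℝ} (hd : 1 < d) : MemLp invMulLog (ENNReal.ofReal d) (muD d) := by
  have hd0 : 0 < d := by linarith
  refine ⟨(Measurable.indicator (by fun_prop) measurableSet_Ici).aestronglyMeasurable, ?_⟩
  have integrand : ∀ y ∈ Ici (1 : ℝ), ENNReal.ofReal (y ^ (d - 1)) * ‖invMulLog y‖ₑ ^ d
      = ENNReal.ofReal (Real.log (2 * y) ^ (-d) / y) := by
    intro y (hy : 1 ≤ y)
    have hL := log_two_mul_pos hy
    have hy0 : 0 < y := by linarith
    rw [invMulLog, indicator_of_mem (mem_Ici.2 hy), Real.enorm_of_nonneg (by positivity),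
      ofReal_rpow_of_nonneg (by positivity) hd0.le, ← ofReal_mul (by positivity),
      Real.inv_rpow (by positivity), Real.mul_rpow hy0.le hL.le, rpow_neg hL.le,
      rpow_sub_one hy0.ne']
    congr 1
    field_simp
  rw [eLpNorm_lt_top_iff_lintegral_rpow_enorm_lt_top (by simpa using hd0) ofReal_ne_top,
    toReal_ofReal hd0.le, lintegral_muD, setLIntegral_congr_fun measurableSet_Ici integrand]
  exact (integrableOn_Ici_log_two_mul_rpow_neg_div hd).lintegral_lt_top

theorem lintegral_Ici_ofReal_inv_mul_log_eq_top {x : ℝ} (hx : 1 ≤ x) :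
    ∫⁻ y in Ici x, ENNReal.ofReal (y * Real.log (2 * y))⁻¹ = ⊤ := by
  by_contra h
  refine not_integrableOn_Ici_inv_mul_log x ⟨by fun_prop, (hasFiniteIntegral_iff_ofReal ?_).2
    (lt_top_iff_ne_top.2 h)⟩
  refine (ae_restrict_iff' measurableSet_Ici).2 (ae_of_all _ fun y (hy : x ≤ y) => ?_)
  have := log_two_mul_pos (hx.trans hy)
  have : 0 < y := by linarith
  positivity

theorem lintegral_Kd_mul_invMulLog_eq_top {d x : ℝ} (hx : 1 ≤ x) :
    ∫⁻ y in Ici (1 : ℝ), ENNReal.ofReal (Kd d x y * invMulLog y * y ^ (d - 1)) = ⊤ := by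
  have hx0 : 0 < x := by linarith
  have integrand : ∀ y ∈ Ici x, ENNReal.ofReal (Kd d x y * invMulLog y * y ^ (d - 1))
      = ENNReal.ofReal (x ^ (1 - d)) * ENNReal.ofReal (y * Real.log (2 * y))⁻¹ := by
    intro y (hy : x ≤ y)
    have hy0 : 0 < y := by linarith
    rw [Kd, if_pos hy, invMulLog, indicator_of_mem (mem_Ici.2 (hx.trans hy)),
      ← ofReal_mul (by positivity),
      show x ^ (1 - d) * y ^ (1 - d) * (y * Real.log (2 * y))⁻¹ * y ^ (d - 1)
        = x ^ (1 - d) * (y * Real.log (2 * y))⁻¹ * y ^ (1 - d + (d - 1)) by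
        rw [rpow_add hy0]; ring]
    simp
  have hc : ENNReal.ofReal (x ^ (1 - d)) ≠ 0 := by simpa using rpow_pos_of_pos hx0 _
  rw [← top_le_iff, ← mul_top hc, ← lintegral_Ici_ofReal_inv_mul_log_eq_top hx,
    ← lintegral_const_mul' _ _ ofReal_ne_top, ← setLIntegral_congr_fun measurableSet_Ici integrand]
  exact lintegral_mono_set (Ici_subset_Ici.2 hx)

/-- For `d > 2`, the operator with kernel `Kd` is bounded on `L^p([1,∞); x^{d-1}dx)`
for all `1 < p < d`, but unbounded on `L^d`: there is a nonnegative `f ∈ L^d` on which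
the kernel integral diverges everywhere. -/
theorem stmt18 (d : ℝ) (hd : 2 < d) :
    (∀ p : ℝ, 1 < p → p < d → ∃ C : ℝ≥0∞, ∀ f : ℝ → ℝ,
      MemLp f (ENNReal.ofReal p) (muD d) →
      MemLp (fun x => ∫ y in Ici (1 : ℝ), Kd d x y * f y * y ^ (d - 1))
        (ENNReal.ofReal p) (muD d) ∧
      eLpNorm (fun x => ∫ y in Ici (1 : ℝ), Kd d x y * f y * y ^ (d - 1))
          (ENNReal.ofReal p) (muD d)
        ≤ C * eLpNorm f (ENNReal.ofReal p) (muD d)) ∧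
    (∃ f : ℝ → ℝ, (∀ y, 0 ≤ f y) ∧ MemLp f (ENNReal.ofReal d) (muD d) ∧
      ∀ x ≥ 1, ∫⁻ y in Ici (1 : ℝ), ENNReal.ofReal (Kd d x y * f y * y ^ (d - 1)) = ⊤) := by
  refine ⟨fun p hp hpd => ?_, invMulLog, invMulLog_nonneg, memLp_invMulLog (by linarith),
    fun x hx => lintegral_Kd_mul_invMulLog_eq_top hx⟩
  obtain ⟨C, hC, hK⟩ := lpKernelBound_Kd hd hp hpd
  refine ⟨C ^ (1 / p), fun f hf => ?_⟩
  simpa only [integral_muD] using hK.memLp_integral (by linarith) (measurable_Kd d) hC hf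
end
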